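/- The action of S on the set of skew-Hermitian 2×2 matrices n with both diagonal entries having positive imaginary part, given by n ↦ sns*, is free: if sns* = n for some such n and s ∈ S, then s is the identity. -/

import Mathlib

/-!
Writing `n = i • t tᴴ` with `t ∈ S`, the fixed-point equation says `(s t)(s t)ᴴ = t tᴴ`.
Since `s t ∈ S` as well, uniqueness of the Cholesky factorization gives `s t = t`, hence `s = 1`.
-/

open Matrix

/-- The group `S`. -/
def IsPosDiagLowerTriangular (s : Matrix (Fin 2) (Fin 2) ℂ) : Prop :=
  ∃ r₁ r₂ : ℝ, 0 < r₁ ∧ 0 < r₂ ∧ ∃ r : ℂ, s = !![(r₁ : ℂ), 0; r, (r₂ : ℂ)]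

namespace IsPosDiagLowerTriangular

theorem mul {s t : Matrix (Fin 2) (Fin 2) ℂ} (hs : IsPosDiagLowerTriangular s)
    (ht : IsPosDiagLowerTriangular t) : IsPosDiagLowerTriangular (s * t) := by
  obtain ⟨a, b, ha, hb, r, rfl⟩ := hs
  obtain ⟨p, c, hp, hc, q, rfl⟩ := ht
  refine ⟨a * p, b * c, mul_pos ha hp, mul_pos hb hc, r * p + b * q, ?_⟩
  ext i j
  fin_cases i <;> fin_cases j <;> simp [Matrix.mul_apply, Fin.sum_univ_two]

theorem isUnit {t : Matrix (Fin 2) (Fin 2) ℂ} (ht : IsPosDiagLowerTriangular t) : IsUnit t := by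
  obtain ⟨p, c, hp, hc, q, rfl⟩ := ht
  rw [Matrix.isUnit_iff_isUnit_det, isUnit_iff_ne_zero]
  simp [Matrix.det_fin_two, hp.ne', hc.ne']

theorem eq_of_mul_conjTranspose_eq {x y : Matrix (Fin 2) (Fin 2) ℂ}
    (hx : IsPosDiagLowerTriangular x) (hy : IsPosDiagLowerTriangular y)
    (h : x * xᴴ = y * yᴴ) : x = y := by
  obtain ⟨a, b, ha, hb, r, rfl⟩ := hx
  obtain ⟨a', b', ha', hb', r', rfl⟩ := hy
  have entry (i j : Fin 2) := congrFun (congrFun h i) j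
  simp only [Matrix.mul_apply, Fin.sum_univ_two] at entry
  obtain rfl : a = a' := by
    refine (mul_self_inj ha.le ha'.le).mp ?_
    simpa [← Complex.ofReal_mul] using entry 0 0
  obtain rfl : r = r' := by
    refine mul_right_cancel₀ (Complex.ofReal_ne_zero.mpr ha.ne') ?_
    simpa using entry 1 0
  obtain rfl : b = b' := by
    refine (mul_self_inj hb.le hb'.le).mp ?_
    simpa [← Complex.ofReal_mul] using entry 1 1
  rfl

end IsPosDiagLowerTriangular

theorem stmt15_general (s n : Matrix (Fin 2) (Fin 2) ℂ)
    (hs : ∃ r₁ r₂ : ℝ, 0 < r₁ ∧ 0 < r₂ ∧ ∃ r : ℂ, s = !![(r₁ : ℂ), 0; r, (r₂ : ℂ)])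
    (horb : ∃ t : Matrix (Fin 2) (Fin 2) ℂ,
      (∃ r₁ r₂ : ℝ, 0 < r₁ ∧ 0 < r₂ ∧ ∃ r : ℂ, t = !![(r₁ : ℂ), 0; r, (r₂ : ℂ)]) ∧
      n = t * (Complex.I • (1 : Matrix (Fin 2) (Fin 2) ℂ)) * tᴴ)
    (hfix : s * n * sᴴ = n) :
    s = 1 := by
  obtain ⟨t, ht, rfl⟩ := horb
  have hgram : (s * t) * (s * t)ᴴ = t * tᴴ := by
    simp only [Matrix.mul_smul, Matrix.mul_one, Matrix.smul_mul] at hfix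
    simpa only [conjTranspose_mul, Matrix.mul_assoc]
      using smul_right_injective _ Complex.I_ne_zero hfix
  have hst : s * t = 1 * t := by
    rw [Matrix.one_mul]
    exact IsPosDiagLowerTriangular.eq_of_mul_conjTranspose_eq (.mul hs ht) ht hgram
  exact (IsPosDiagLowerTriangular.isUnit ht).mul_right_cancel hst

/-- the action `n ↦ sns*` of `S` on the orbit of `diag(i,i)` (skew-Hermitian
matrices with positive imaginary parts on the diagonal) is free: `sns* = n` forces `s = 1`. -/
theorem stmt15 (s n : Matrix (Fin 2) (Fin 2) ℂ)
    (hs : ∃ r₁ r₂ : ℝ, 0 < r₁ ∧ 0 < r₂ ∧ ∃ r : ℂ, s = !![(r₁ : ℂ), 0; r, (r₂ : ℂ)])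
    (hskew : n + nᴴ = 0) (h11 : 0 < (n 0 0).im) (h22 : 0 < (n 1 1).im)
    (horb : ∃ t : Matrix (Fin 2) (Fin 2) ℂ,
      (∃ r₁ r₂ : ℝ, 0 < r₁ ∧ 0 < r₂ ∧ ∃ r : ℂ, t = !![(r₁ : ℂ), 0; r, (r₂ : ℂ)]) ∧
      n = t * (Complex.I • (1 : Matrix (Fin 2) (Fin 2) ℂ)) * tᴴ)
    (hfix : s * n * sᴴ = n) :
    s = 1 :=
  stmt15_general s n hs horb hfix
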